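/- The topological entropy of the compactified slow Gauss map g̃ : [0,1] → [0,1] equals log((1+√5)/2). -/

import Mathlib

/-- The compactified slow Gauss map `g̃ = k ∘ g ∘ k⁻¹ : [0,1] → [0,1]`, `k(x) = x/(1+x)`:
`g̃(0) = 1`, `g̃(x) = 1 - x` on `(0,1/2)`, `g̃(x) = 2 - 1/x` on `[1/2,1]`. -/
noncomputable def gtilde (x : ℝ) : ℝ :=
  if x = 0 then 1
  else if x < 1/2 then 1 - x
  else 2 - 1/x

/-!
Code the orbit of `x ∈ [0, 1]` by its itinerary through `[0, 1/2)` (letter `false`) and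
`[1/2, 1]` (letter `true`). As `gtilde` maps `[0, 1/2)` into `(1/2, 1]`, the itineraries of
length `n` are the words without two consecutive `false`s, and there are `fib (n + 2)` of them.

Lower bound: pulling a point back along the inverse branches realises every such word, and two
points with different itineraries are `1/10` apart at the first time their letters differ or
at the next one, which gives `(n + 1)`-step separated sets of size `fib (n + 2)`.

Upper bound: on a cylinder every iterate `gtilde^[k]` is monotone, so a suitably signed sum of
the grid positions `⌊M * gtilde^[k] x⌋`, `k < n`, is monotone in `x` and determines all of them.
Itinerary and this integer in `[-nM, nM]` fix the orbit up to `1/M`, so `n`-step covers of size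
`fib (n + 2) * (2nM + 1)` exist, and `fib (n + 2) ≤ φ ^ (n + 1)`.
-/

open Set Function Filter Topology Dynamics ExpGrowth
open scoped goldenRatio ENNReal

namespace Dynamics

variable {X : Type*} {T : X → X} {F : Set X} {n : ℕ}

lemma coverMincard_le_card_of_mapsTo {κ : Type*} {U : SetRel X X} (c : X → κ) (K : Finset κ)
    (hc : MapsTo c F K) (hU : ∀ x ∈ F, ∀ y ∈ F, c x = c y → (x, y) ∈ dynEntourage T U n) :
    coverMincard T F U n ≤ K.card := by
  classical
  rcases F.eq_empty_or_nonempty with rfl | ⟨x₀, -⟩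
  · simp [coverMincard_empty]
  have : Nonempty X := ⟨x₀⟩
  have hcover : IsDynCoverOf T F U n ↑(K.image (invFunOn c F)) := by
    intro x hx
    have hex : ∃ y ∈ F, c y = c x := ⟨x, hx, rfl⟩
    refine ⟨invFunOn c F (c x), Finset.mem_image_of_mem _ (hc hx), ?_⟩
    exact hU x hx _ (invFunOn_mem hex) (invFunOn_eq hex).symm
  exact hcover.coverMincard_le_card.trans (by exact_mod_cast Finset.card_image_le)

lemma card_le_netMaxcard_of_separated [PseudoMetricSpace X] {ι : Type*} {δ : ℝ} (hδ : 0 < δ)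
    (p : ι → X) (S : Finset ι) (hp : ∀ i ∈ S, p i ∈ F)
    (hsep : ∀ i ∈ S, ∀ j ∈ S, i ≠ j → ∃ k < n, 2 * δ ≤ dist (T^[k] (p i)) (T^[k] (p j))) :
    (S.card : ℕ∞) ≤ netMaxcard T F {q | dist q.1 q.2 < δ} n := by
  classical
  have hinj : InjOn p S := by
    intro i hi j hj hij
    by_contra hne
    obtain ⟨k, -, hk⟩ := hsep i hi j hj hne
    rw [hij, dist_self] at hk
    linarith
  have hnet : IsDynNetIn T F {q | dist q.1 q.2 < δ} n ↑(S.image p) := by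
    refine ⟨by simpa [Set.subset_def] using hp, ?_⟩
    simp only [Finset.coe_image]
    rintro _ ⟨i, hi, rfl⟩ _ ⟨j, hj, rfl⟩ hpij
    obtain ⟨k, hkn, hk⟩ := hsep i hi j hj fun h ↦ hpij (congrArg p h)
    refine Set.disjoint_left.2 fun z hzi hzj ↦ ?_
    have hi' := mem_dynEntourage.1 hzi k hkn
    have hj' := mem_dynEntourage.1 hzj k hkn
    simp only [mem_ofPred_eq] at hi' hj'
    linarith [dist_triangle_right (T^[k] (p i)) (T^[k] (p j)) (T^[k] z)]
  simpa [Finset.card_image_of_injOn hinj] using hnet.card_le_netMaxcard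

end Dynamics

namespace ExpGrowth

lemma expGrowthSup_natCast_add_one : expGrowthSup (fun n : ℕ ↦ (n + 1 : ℝ≥0∞)) = 0 := by
  have hreal : Tendsto (fun n : ℕ ↦ Real.log (n + 1) / n) atTop (𝓝 0) := by
    have := (Real.tendsto_pow_log_div_mul_add_atTop 1 (-1) 1 one_ne_zero).comp
      (tendsto_atTop_add_const_right _ 1 tendsto_natCast_atTop_atTop)
    refine this.congr fun n ↦ ?_
    simp
  refine (EReal.tendsto_coe.2 hreal).congr (fun n ↦ ?_) |>.limsup_eq
  rw [EReal.coe_div, ← ENNReal.log_ofReal_of_pos (by positivity)]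
  norm_cast

lemma expGrowthSup_le_log_of_le_mul_pow {u : ℕ → ℝ≥0∞} {a C : ℝ≥0∞} (hC : C ≠ ⊤)
    (h : ∀ n, u n ≤ C * ((n + 1) * a ^ n)) : expGrowthSup u ≤ ENNReal.log a := by
  refine (expGrowthSup_le_of_eventually_le hC (Eventually.of_forall h)).trans ?_
  refine (expGrowthSup_mul_le (u := fun n : ℕ ↦ (n + 1 : ℝ≥0∞)) (v := (a ^ ·)) ?_ ?_).trans ?_
    <;> simp [expGrowthSup_natCast_add_one, expGrowthSup_pow]

end ExpGrowth

namespace Real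

lemma goldenRatio_pow_le_fib (n : ℕ) : φ ^ n ≤ Nat.fib (n + 2) := by
  rw [← fib_succ_sub_goldenConj_mul_fib, Nat.fib_add_two, Nat.cast_add]
  have := neg_one_lt_goldenConj
  have : (0 : ℝ) ≤ Nat.fib n := Nat.cast_nonneg _
  nlinarith

lemma fib_le_goldenRatio_pow (n : ℕ) : (Nat.fib (n + 2) : ℝ) ≤ φ ^ (n + 1) := by
  rw [← goldenRatio_mul_fib_succ_add_fib, Nat.fib_add_two, Nat.cast_add]
  have := one_lt_goldenRatio
  have : (0 : ℝ) ≤ Nat.fib (n + 1) := Nat.cast_nonneg _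
  nlinarith

end Real

namespace SlowGauss

lemma gtilde_of_lt_half {x : ℝ} (h : x < 1/2) : gtilde x = 1 - x := by
  rcases eq_or_ne x 0 with rfl | hx
  · simp [gtilde]
  · rw [gtilde, if_neg hx, if_pos h]

lemma gtilde_of_half_le {x : ℝ} (h : 1/2 ≤ x) : gtilde x = 2 - 1/x := by
  rw [gtilde, if_neg (by rintro rfl; norm_num at h), if_neg h.not_gt]

lemma half_lt_gtilde_of_lt_half {x : ℝ} (h : x < 1/2) : 1/2 < gtilde x := by
  rw [gtilde_of_lt_half h]; linarith

lemma mapsTo_gtilde : MapsTo gtilde (Icc 0 1) (Icc 0 1) := by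
  rintro x ⟨hx0, hx1⟩
  rcases lt_or_ge x (1/2) with h | h
  · rw [gtilde_of_lt_half h]; constructor <;> linarith
  · have : 1 ≤ 1/x ∧ 1/x ≤ 2 :=
      ⟨by rw [le_div_iff₀] <;> linarith, by rw [div_le_iff₀] <;> linarith⟩
    rw [gtilde_of_half_le h]; constructor <;> linarith

lemma antitoneOn_gtilde : AntitoneOn gtilde (Iio (1/2)) := fun x hx y hy hxy ↦ by
  rw [gtilde_of_lt_half hx, gtilde_of_lt_half hy]; linarith

lemma monotoneOn_gtilde : MonotoneOn gtilde (Ici (1/2)) := fun x hx y hy hxy ↦ by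
  rw [gtilde_of_half_le hx, gtilde_of_half_le hy]
  have := one_div_le_one_div_of_le (lt_of_lt_of_le (by norm_num) hx) hxy
  linarith

lemma le_dist_or_le_dist_gtilde {x y : ℝ} (hx : x < 1/2) (hy : 1/2 ≤ y) :
    1/10 ≤ dist x y ∨ 1/10 ≤ dist (gtilde x) (gtilde y) := by
  rw [Real.dist_eq, Real.dist_eq]
  rcases le_or_gt (1/10) |x - y| with h | h
  · exact Or.inl h
  right
  have hy' : y < 3/5 := by linarith [(abs_sub_lt_iff.1 h).2]
  have : 5/3 < 1/y := by rw [lt_div_iff₀] <;> linarith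
  rw [gtilde_of_lt_half hx, gtilde_of_half_le hy, abs_of_pos (by linarith)]
  linarith

/-- `false` codes the left branch `[0, 1/2)`, which `gtilde` maps into the right branch. -/
def IsAdmissible (l : List Bool) : Prop := l.IsChain fun a b ↦ a = true ∨ b = true

@[simp] lemma isAdmissible_nil : IsAdmissible [] := List.isChain_nil

@[simp] lemma isAdmissible_singleton (b : Bool) : IsAdmissible [b] := List.isChain_singleton b

@[simp] lemma isAdmissible_cons_cons {a b : Bool} {l : List Bool} :
    IsAdmissible (a :: b :: l) ↔ (a = true ∨ b = true) ∧ IsAdmissible (b :: l) :=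
  List.isChain_cons_cons

@[simp] lemma isAdmissible_true_cons {l : List Bool} :
    IsAdmissible (true :: l) ↔ IsAdmissible l := by
  simp [IsAdmissible, List.isChain_cons]

lemma IsAdmissible.tail {b : Bool} {l : List Bool} (h : IsAdmissible (b :: l)) :
    IsAdmissible l := (List.isChain_cons.1 h).2

def admissibleWords : ℕ → Finset (List Bool)
  | 0 => {[]}
  | 1 => {[true], [false]}
  | n + 2 => (admissibleWords (n + 1)).image (true :: ·) ∪
      (admissibleWords n).image (fun l ↦ false :: true :: l)

lemma mem_admissibleWords : ∀ {n : ℕ} {l : List Bool},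
    l ∈ admissibleWords n ↔ l.length = n ∧ IsAdmissible l
  | 0, l => by cases l <;> simp [admissibleWords]
  | 1, l => by rcases l with _ | ⟨b, _ | ⟨c, l⟩⟩ <;> simp [admissibleWords]
  | n + 2, l => by
    rcases l with _ | ⟨b, _ | ⟨c, l⟩⟩
    · simp [admissibleWords]
    · simp [admissibleWords, mem_admissibleWords]
    cases b <;> cases c <;> simp [admissibleWords, mem_admissibleWords]

lemma card_admissibleWords : ∀ n, (admissibleWords n).card = Nat.fib (n + 2)
  | 0 => rfl
  | 1 => rfl
  | n + 2 => by
    rw [admissibleWords, Finset.card_union_of_disjoint, Finset.card_image_of_injective,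
      Finset.card_image_of_injective, card_admissibleWords (n + 1), card_admissibleWords n,
      Nat.fib_add_two (n := n + 2), add_comm]
    · intro a b h; simpa using h
    · intro a b h; simpa using h
    · simp [Finset.disjoint_left]

noncomputable def itinerary : ℕ → ℝ → List Bool
  | 0, _ => []
  | n + 1, x => decide (1/2 ≤ x) :: itinerary n (gtilde x)

@[simp] lemma length_itinerary : ∀ (n : ℕ) (x : ℝ), (itinerary n x).length = n
  | 0, _ => rfl
  | n + 1, x => by simp [itinerary, length_itinerary n]

lemma isAdmissible_itinerary : ∀ (n : ℕ) {x : ℝ}, x ∈ Icc 0 1 → IsAdmissible (itinerary n x)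
  | 0, _, _ => isAdmissible_nil
  | 1, _, _ => isAdmissible_singleton _
  | n + 2, x, hx => by
    have hrest := isAdmissible_itinerary (n + 1) (mapsTo_gtilde hx)
    simp only [itinerary, isAdmissible_cons_cons, decide_eq_true_eq] at hrest ⊢
    refine ⟨?_, hrest⟩
    rcases lt_or_ge x (1/2) with h | h
    · exact Or.inr (half_lt_gtilde_of_lt_half h).le
    · exact Or.inl h

lemma itinerary_take : ∀ {n k : ℕ} (x : ℝ), k ≤ n → (itinerary n x).take k = itinerary k x
  | _, 0, _, _ => by simp [itinerary]
  | n + 1, k + 1, x, h => by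
    simp [itinerary, itinerary_take (gtilde x) (Nat.le_of_succ_le_succ h)]

lemma exists_le_dist_of_itinerary_ne : ∀ {n : ℕ} {x y : ℝ}, itinerary n x ≠ itinerary n y →
    ∃ k ≤ n, 1/10 ≤ dist (gtilde^[k] x) (gtilde^[k] y)
  | 0, _, _, h => absurd rfl h
  | n + 1, x, y, h => by
    by_cases hxy : decide (1/2 ≤ x) = decide (1/2 ≤ y)
    · obtain ⟨k, hk, hsep⟩ := exists_le_dist_of_itinerary_ne (n := n) fun h' ↦ h (by
        rw [itinerary, itinerary, hxy, h'])
      exact ⟨k + 1, by omega, hsep⟩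
    replace hxy : ¬(1/2 ≤ x ↔ 1/2 ≤ y) := fun h ↦ hxy (decide_eq_decide.2 h)
    have hsep : 1/10 ≤ dist x y ∨ 1/10 ≤ dist (gtilde x) (gtilde y) := by
      rcases lt_or_ge x (1/2) with hx | hx
      · exact le_dist_or_le_dist_gtilde hx (by have := hx.not_ge; tauto)
      · have hy : y < 1/2 := lt_of_not_ge (by tauto)
        simpa only [dist_comm] using le_dist_or_le_dist_gtilde hy hx
    rcases hsep with h0 | h1
    · exact ⟨0, by omega, h0⟩
    · exact ⟨1, by omega, h1⟩

/-- The point of the cylinder of `l` obtained by pulling `3/5` back along the inverse branches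
of `gtilde`. -/
noncomputable def cylinderPoint : List Bool → ℝ
  | [] => 3/5
  | true :: l => 1 / (2 - cylinderPoint l)
  | false :: l => 1 - cylinderPoint l

lemma cylinderPoint_mem_Ioo : ∀ l : List Bool, cylinderPoint l ∈ Ioo 0 1
  | [] => by norm_num [cylinderPoint]
  | true :: l => by
    obtain ⟨h0, h1⟩ := cylinderPoint_mem_Ioo l
    rw [cylinderPoint]
    constructor
    · exact div_pos one_pos (by linarith)
    · rw [div_lt_one (by linarith)]; linarith
  | false :: l => by
    obtain ⟨h0, h1⟩ := cylinderPoint_mem_Ioo l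
    rw [cylinderPoint]
    constructor <;> linarith

lemma half_lt_cylinderPoint {l : List Bool} (h : l.head? ≠ some false) :
    1/2 < cylinderPoint l := by
  rcases l with _ | ⟨_ | _, l⟩
  · norm_num [cylinderPoint]
  · simp at h
  · have := cylinderPoint_mem_Ioo l
    rw [cylinderPoint, lt_div_iff₀ (by linarith [this.2])]
    linarith [this.1]

lemma cylinderPoint_false_cons_lt_half {l : List Bool} (h : IsAdmissible (false :: l)) :
    cylinderPoint (false :: l) < 1/2 := by
  have : l.head? ≠ some false := by
    rcases l with _ | ⟨_ | _, l⟩ <;> simp_all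
  rw [cylinderPoint]
  linarith [half_lt_cylinderPoint this]

lemma itinerary_cylinderPoint : ∀ {l : List Bool}, IsAdmissible l →
    itinerary l.length (cylinderPoint l) = l
  | [], _ => rfl
  | true :: l, h => by
    have hhalf := half_lt_cylinderPoint (l := true :: l) (by simp)
    rw [List.length_cons, itinerary, decide_eq_true hhalf.le, gtilde_of_half_le hhalf.le]
    simp only [cylinderPoint, one_div_one_div, sub_sub_cancel, itinerary_cylinderPoint h.tail]
  | false :: l, h => by
    have hhalf := cylinderPoint_false_cons_lt_half h
    rw [List.length_cons, itinerary, gtilde_of_lt_half hhalf, decide_eq_false hhalf.not_ge]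
    simp only [cylinderPoint, sub_sub_cancel, itinerary_cylinderPoint h.tail]

/-- `gtilde^[n]` preserves or reverses the order on the cylinder of `l` according as this sign
is `1` or `-1`. -/
def orientation (l : List Bool) : ℤ := (-1) ^ l.count false

lemma orientation_eq_one_or (l : List Bool) : orientation l = 1 ∨ orientation l = -1 :=
  neg_one_pow_eq_or ℤ _

@[simp] lemma orientation_true_cons (l : List Bool) : orientation (true :: l) = orientation l := by
  simp [orientation]

@[simp] lemma orientation_false_cons (l : List Bool) :
    orientation (false :: l) = -orientation l := by
  simp [orientation, pow_succ]

lemma orientation_mul_sub_iterate_nonneg : ∀ (n : ℕ) {x y : ℝ}, x ≤ y →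
    itinerary n x = itinerary n y →
    0 ≤ (orientation (itinerary n x) : ℝ) * (gtilde^[n] y - gtilde^[n] x)
  | 0, x, y, hxy, _ => by simpa [itinerary, orientation] using hxy
  | n + 1, x, y, hxy, h => by
    simp only [itinerary, List.cons.injEq, decide_eq_decide] at h ⊢
    obtain ⟨hhalf, htail⟩ := h
    rw [iterate_succ_apply, iterate_succ_apply]
    rcases le_or_gt (1/2) x with hx | hx
    · have hy := hx.trans hxy
      rw [decide_eq_true hx, orientation_true_cons]
      exact orientation_mul_sub_iterate_nonneg n (monotoneOn_gtilde hx hy hxy) htail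
    · have hy : y < 1/2 := lt_of_not_ge fun hy ↦ hx.not_ge (hhalf.2 hy)
      have := orientation_mul_sub_iterate_nonneg n (antitoneOn_gtilde hx hy hxy) htail.symm
      rw [← htail] at this
      simp only [decide_eq_false hx.not_ge, orientation_false_cons, Int.cast_neg]
      linarith

/-- The signs make all summands move in the same direction along a cylinder, so two points of a
cylinder with equal codes have equal grid positions at every time `k < n`. -/
noncomputable def gridCode (M n : ℕ) (x : ℝ) : ℤ :=
  ∑ k ∈ Finset.range n, orientation (itinerary k x) * ⌊M * gtilde^[k] x⌋

lemma gridCode_mem {M n : ℕ} {x : ℝ} (hx : x ∈ Icc 0 1) :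
    gridCode M n x ∈ Finset.Icc (-(n * M : ℤ)) (n * M) := by
  have hterm : ∀ k ∈ Finset.range n,
      |orientation (itinerary k x) * ⌊M * gtilde^[k] x⌋| ≤ M := by
    intro k _
    obtain ⟨h0, h1⟩ := mapsTo_gtilde.iterate k hx
    have hM : (0 : ℝ) ≤ M := M.cast_nonneg
    rw [abs_mul, abs_of_nonneg (Int.floor_nonneg.2 (by positivity))]
    rcases orientation_eq_one_or (itinerary k x) with ho | ho <;> rw [ho] <;> norm_num <;>
      exact Int.floor_le_iff.2 (by push_cast; nlinarith)
  have := (Finset.abs_sum_le_sum_abs _ _).trans (Finset.sum_le_sum hterm)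
  rw [Finset.sum_const, Finset.card_range, nsmul_eq_mul] at this
  exact Finset.mem_Icc.2 (abs_le.1 this)

lemma dist_iterate_lt_of_gridCode_eq {M n : ℕ} (hM : 0 < M) {x y : ℝ} (hxy : x ≤ y)
    (hi : itinerary n x = itinerary n y) (hg : gridCode M n x = gridCode M n y) :
    ∀ k < n, dist (gtilde^[k] x) (gtilde^[k] y) < 1 / M := by
  have hik : ∀ k ∈ Finset.range n, itinerary k x = itinerary k y := fun k hk ↦ by
    have hkn := (Finset.mem_range.1 hk).le
    rw [← itinerary_take x hkn, hi, itinerary_take y hkn]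
  have hnonneg : ∀ k ∈ Finset.range n, 0 ≤ orientation (itinerary k x) *
      (⌊M * gtilde^[k] y⌋ - ⌊M * gtilde^[k] x⌋) := by
    intro k hk
    have := orientation_mul_sub_iterate_nonneg k hxy (hik k hk)
    rcases orientation_eq_one_or (itinerary k x) with ho | ho <;>
      simp only [ho, Int.cast_one, Int.cast_neg, one_mul, neg_one_mul, neg_nonneg, sub_nonneg,
        sub_nonpos] at this ⊢ <;>
      exact Int.floor_le_floor (mul_le_mul_of_nonneg_left this M.cast_nonneg)
  have hsum : ∑ k ∈ Finset.range n, orientation (itinerary k x) *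
      (⌊M * gtilde^[k] y⌋ - ⌊M * gtilde^[k] x⌋) = 0 := by
    calc _ = gridCode M n y - gridCode M n x := by
          rw [gridCode, gridCode, ← Finset.sum_sub_distrib]
          refine Finset.sum_congr rfl fun k hk ↦ ?_
          rw [hik k hk]
          ring
      _ = 0 := by rw [hg, sub_self]
  intro k hk
  have hfloor : ⌊M * gtilde^[k] x⌋ = ⌊M * gtilde^[k] y⌋ := by
    have := (Finset.sum_eq_zero_iff_of_nonneg hnonneg).1 hsum k (Finset.mem_range.2 hk)
    rcases orientation_eq_one_or (itinerary k x) with ho | ho <;> rw [ho] at this <;> linarith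
  have hM' : (0 : ℝ) < M := by exact_mod_cast hM
  have := Int.abs_sub_lt_one_of_floor_eq_floor hfloor
  rw [← mul_sub, abs_mul, abs_of_pos hM'] at this
  rw [Real.dist_eq, lt_div_iff₀ hM']
  linarith

lemma coverMincard_gtilde_le {M : ℕ} (hM : 0 < M) (n : ℕ) :
    coverMincard gtilde (Icc 0 1) {p | dist p.1 p.2 < 1 / M} n
      ≤ (Nat.fib (n + 2) * (2 * n * M + 1) : ℕ) := by
  have hcard : (admissibleWords n ×ˢ Finset.Icc (-(n * M : ℤ)) (n * M)).card
      = Nat.fib (n + 2) * (2 * n * M + 1) := by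
    rw [Finset.card_product, card_admissibleWords, Int.card_Icc,
      show (n * M : ℤ) + 1 - -(n * M) = (2 * n * M + 1 : ℕ) by push_cast; ring, Int.toNat_natCast]
  rw [← hcard]
  refine coverMincard_le_card_of_mapsTo (fun x ↦ (itinerary n x, gridCode M n x)) _
    (fun x hx ↦ ?_) fun x _ y _ hxy ↦ mem_dynEntourage.2 fun k hk ↦ ?_
  · simp only [Finset.coe_product, mem_prod, Finset.mem_coe]
    exact ⟨mem_admissibleWords.2 ⟨length_itinerary n x, isAdmissible_itinerary n hx⟩,
      gridCode_mem hx⟩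
  · simp only [Prod.mk.injEq] at hxy
    rcases le_total x y with h | h
    · exact dist_iterate_lt_of_gridCode_eq hM h hxy.1 hxy.2 k hk
    · rw [mem_ofPred_eq, dist_comm]
      exact dist_iterate_lt_of_gridCode_eq hM h hxy.1.symm hxy.2.symm k hk

lemma fib_le_netMaxcard_gtilde (n : ℕ) :
    (Nat.fib (n + 2) : ℕ∞) ≤ netMaxcard gtilde (Icc 0 1) {p | dist p.1 p.2 < 1/20} (n + 1) := by
  rw [← card_admissibleWords]
  refine card_le_netMaxcard_of_separated (by norm_num) cylinderPoint _
    (fun l _ ↦ Ioo_subset_Icc_self (cylinderPoint_mem_Ioo l)) fun l hl l' hl' hne ↦ ?_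
  have hit : ∀ l ∈ admissibleWords n, itinerary n (cylinderPoint l) = l := fun l hl ↦ by
    obtain ⟨hlen, hadm⟩ := mem_admissibleWords.1 hl
    exact hlen ▸ itinerary_cylinderPoint hadm
  obtain ⟨k, hk, hsep⟩ := exists_le_dist_of_itinerary_ne
    (x := cylinderPoint l) (y := cylinderPoint l') (by rwa [hit l hl, hit l' hl'])
  exact ⟨k, Nat.lt_succ_of_le hk, by linarith⟩

lemma coverEntropyEntourage_gtilde_le {M : ℕ} (hM : 0 < M) :
    coverEntropyEntourage gtilde (Icc 0 1) {p | dist p.1 p.2 < 1 / M} ≤ Real.log φ := by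
  rw [← ENNReal.log_ofReal_of_pos Real.goldenRatio_pos]
  refine expGrowthSup_le_log_of_le_mul_pow (C := ENNReal.ofReal (φ * (2 * M + 1)))
    ENNReal.ofReal_ne_top fun n ↦ ?_
  have hreal : ((Nat.fib (n + 2) * (2 * n * M + 1) : ℕ) : ℝ)
      ≤ φ * (2 * M + 1) * ((n + 1) * φ ^ n) := by
    have hpoly : (2 * n * M + 1 : ℝ) ≤ (2 * M + 1) * (n + 1) := by
      nlinarith [M.cast_nonneg (α := ℝ)]
    calc _ = (Nat.fib (n + 2) : ℝ) * (2 * n * M + 1) := by push_cast; ring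
      _ ≤ φ ^ (n + 1) * ((2 * M + 1) * (n + 1)) :=
        mul_le_mul (Real.fib_le_goldenRatio_pow n) hpoly (by positivity) (by positivity)
      _ = _ := by ring
  calc (coverMincard gtilde (Icc 0 1) {p | dist p.1 p.2 < 1 / M} n : ℝ≥0∞)
      ≤ ((Nat.fib (n + 2) * (2 * n * M + 1) : ℕ) : ℝ≥0∞) := by
        exact_mod_cast ENat.toENNReal_mono (coverMincard_gtilde_le hM n)
    _ ≤ ENNReal.ofReal (φ * (2 * M + 1) * ((n + 1) * φ ^ n)) := by
        rw [← ENNReal.ofReal_natCast]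
        exact ENNReal.ofReal_le_ofReal hreal
    _ = _ := by
        rw [ENNReal.ofReal_mul (p := φ * (2 * M + 1)) (by positivity),
          ENNReal.ofReal_mul (p := (n : ℝ) + 1) (by positivity),
          ENNReal.ofReal_pow Real.goldenRatio_pos.le, ← Nat.cast_add_one, ENNReal.ofReal_natCast]
        norm_cast

lemma log_goldenRatio_le_netEntropyEntourage_gtilde :
    Real.log φ ≤ netEntropyEntourage gtilde (Icc 0 1) {p | dist p.1 p.2 < 1/20} := by
  rw [← ENNReal.log_ofReal_of_pos Real.goldenRatio_pos, ← expGrowthSup_pow, netEntropyEntourage]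
  have hφ : ENNReal.ofReal φ ≠ 0 := (ENNReal.ofReal_pos.2 Real.goldenRatio_pos).ne'
  refine expGrowthSup_of_eventually_ge (b := (ENNReal.ofReal φ)⁻¹)
    (ENNReal.inv_ne_zero.2 ENNReal.ofReal_ne_top)
    (eventually_atTop.2 ⟨1, fun n hn ↦ ?_⟩)
  obtain ⟨n, rfl⟩ := Nat.exists_eq_add_of_le' hn
  calc (ENNReal.ofReal φ)⁻¹ * ENNReal.ofReal φ ^ (n + 1) = ENNReal.ofReal (φ ^ n) := by
        rw [pow_succ', ← mul_assoc, ENNReal.inv_mul_cancel hφ ENNReal.ofReal_ne_top, one_mul,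
          ENNReal.ofReal_pow Real.goldenRatio_pos.le]
    _ ≤ (Nat.fib (n + 2) : ℝ≥0∞) := by
        rw [← ENNReal.ofReal_natCast]
        exact ENNReal.ofReal_le_ofReal (Real.goldenRatio_pow_le_fib n)
    _ ≤ _ := by exact_mod_cast ENat.toENNReal_mono (fib_le_netMaxcard_gtilde n)

end SlowGauss

/-- The topological entropy (Bowen–Dinaburg cover entropy) of the compactified slow Gauss
map `g̃ : [0,1] → [0,1]` equals `log((1+√5)/2)`. -/
theorem entropy_slow_gauss :
    Dynamics.coverEntropy gtilde (Set.Icc (0 : ℝ) 1) =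
      (Real.log ((1 + Real.sqrt 5) / 2) : EReal) := by
  change coverEntropy gtilde (Icc 0 1) = (Real.log φ : EReal)
  refine le_antisymm ?_ ?_
  · rw [coverEntropy_eq_iSup_basis Metric.uniformity_basis_dist_inv_nat_succ]
    refine iSup₂_le fun m _ ↦ ?_
    simpa using SlowGauss.coverEntropyEntourage_gtilde_le m.succ_pos
  · exact SlowGauss.log_goldenRatio_le_netEntropyEntourage_gtilde.trans
      (netEntropyEntourage_le_coverEntropy gtilde _ (Metric.dist_mem_uniformity (by norm_num)))
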